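/- arXiv:1812.11375 — 6 statements merged into one kernel-verified Lean document; each statement's English description precedes it below -/
import Mathlib

section
/- Let E be a field of characteristic zero with a derivation δ (write a' := δ(a)), and extend δ to E[[x]] coefficientwise: δ(Σ c_i x^i) = Σ δ(c_i) x^i. Let a ∈ E with a' ≠ 0 and let m ∈ ℤ_{≥0}. Then the m+1 power series δ^r(e^{ax}) for 0 ≤ r ≤ m, where e^{ax} := Σ_{n≥0} a^n x^n / n! ∈ E[[x]], are linearly independent over E. -/
/-- The exponential power series `e^{ax} = Σ_{n ≥ 0} aⁿ xⁿ / n!` in `E⟦X⟧`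
(for `E` of characteristic zero). -/
noncomputable def expSeries' {E : Type*} [Field E] [CharZero E] (a : E) : PowerSeries E :=
  PowerSeries.mk fun n => a ^ n / (n.factorial : E)

/-- The coefficientwise extension of a map `d : E → E` to `E⟦X⟧`:
`δ(Σ cᵢ xⁱ) = Σ δ(cᵢ) xⁱ`. -/
noncomputable def coeffWiseMap {E : Type*} [Field E] (d : E → E) (f : PowerSeries E) :
    PowerSeries E :=
  PowerSeries.mk fun n => d (PowerSeries.coeff n f)

/-!
If `a′ = u * a`, then `(aⁿ)′ = n u aⁿ`, and since `n` is a constant, differentiating `aⁿ p(n)`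
gives `aⁿ (n u p(n) + p^δ(n))`, where `p^δ` differentiates the coefficients of `p`. Hence
`δʳ(aⁿ) = aⁿ Pᵣ(n)` for polynomials `Pᵣ ∈ E[X]` of degree `r` with leading coefficient `uʳ`, and
the `n`-th coefficient of `δʳ(e^{ax})` is `(aⁿ / n!) Pᵣ(n)`. Taking `u = a′ / a ≠ 0`, the `Pᵣ` have
distinct degrees, so they are linearly independent, and `p ↦ Σ (aⁿ / n!) p(n) xⁿ` is injective on
`E[X]` because in characteristic zero a polynomial vanishing on `ℕ` is zero.
-/

open Polynomial
open scoped Differential PowerSeries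

def Derivation.ofAddLeibniz {A : Type*} [CommRing A] (δ : A → A)
    (hadd : ∀ x y, δ (x + y) = δ x + δ y) (hleib : ∀ x y, δ (x * y) = δ x * y + x * δ y) :
    Derivation ℤ A A :=
  Derivation.mk' (AddMonoidHom.mk' δ hadd).toIntLinearMap fun x y => by
    simp [hleib, add_comm, mul_comm]

theorem coeff_iterate_coeffWiseMap {E : Type*} [Field E] (d : E → E) (r n : ℕ) (f : E⟦X⟧) :
    PowerSeries.coeff n ((coeffWiseMap d)^[r] f) = d^[r] (PowerSeries.coeff n f) := by
  induction r with
  | zero => rfl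
  | succ r ih => simp [Function.iterate_succ_apply', coeffWiseMap, ih]

namespace Differential

section CommRing

variable {A : Type*} [CommRing A] [Differential A]

noncomputable def powDerivPoly (u : A) : ℕ → A[X]
  | 0 => 1
  | r + 1 => C u * X * powDerivPoly u r + mapCoeffs (powDerivPoly u r)

theorem deriv_eval_natCast (p : A[X]) (n : ℕ) :
    (p.eval (n : A))′ = (mapCoeffs p).eval (n : A) := by
  simpa using deriv_aeval_eq (n : A) p

theorem deriv_pow_of_deriv_eq_mul {a u : A} (ha : a′ = u * a) (n : ℕ) :
    (a ^ n)′ = n * u * a ^ n := by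
  cases n with
  | zero => simp
  | succ n =>
    rw [Derivation.leibniz_pow, ha, Nat.add_sub_cancel, nsmul_eq_mul, smul_eq_mul, pow_succ]
    ring

theorem iterate_deriv_pow_of_deriv_eq_mul {a u : A} (ha : a′ = u * a) (r n : ℕ) :
    (⇑deriv)^[r] (a ^ n) = a ^ n * (powDerivPoly u r).eval (n : A) := by
  induction r with
  | zero => simp [powDerivPoly]
  | succ r ih =>
    rw [Function.iterate_succ_apply', ih, Derivation.leibniz, deriv_pow_of_deriv_eq_mul ha,
      deriv_eval_natCast, powDerivPoly]
    simp only [eval_add, eval_mul, eval_C, eval_X, smul_eq_mul]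
    ring

theorem natDegree_powDerivPoly_le (u : A) (r : ℕ) : (powDerivPoly u r).natDegree ≤ r := by
  induction r with
  | zero => simp [powDerivPoly]
  | succ r ih =>
    rw [natDegree_le_iff_coeff_eq_zero] at ih ⊢
    intro N hN
    obtain ⟨k, rfl⟩ : ∃ k, N = k + 1 := ⟨N - 1, by omega⟩
    simp [powDerivPoly, mul_assoc, ih k (by omega), ih (k + 1) (by omega)]

theorem coeff_powDerivPoly_self (u : A) (r : ℕ) : (powDerivPoly u r).coeff r = u ^ r := by
  induction r with
  | zero => simp [powDerivPoly]
  | succ r ih =>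
    have hzero := (natDegree_le_iff_coeff_eq_zero.mp (natDegree_powDerivPoly_le u r)) (r + 1)
      (by omega)
    rw [powDerivPoly, coeff_add, coeff_mapCoeffs, hzero, map_zero, add_zero, mul_assoc,
      coeff_C_mul, coeff_X_mul, ih, pow_succ, mul_comm]

theorem degree_powDerivPoly [IsDomain A] {u : A} (hu : u ≠ 0) (r : ℕ) :
    (powDerivPoly u r).degree = r :=
  degree_eq_of_le_of_coeff_ne_zero (natDegree_le_iff_degree_le.mp (natDegree_powDerivPoly_le u r))
    (by rw [coeff_powDerivPoly_self]; exact pow_ne_zero r hu)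

noncomputable def powDerivSeq [IsDomain A] {u : A} (hu : u ≠ 0) : Polynomial.Sequence A where
  elems' := powDerivPoly u
  degree_eq' := degree_powDerivPoly hu

end CommRing

theorem iterate_deriv_div_of_deriv_eq_zero {K : Type*} [Field K] [Differential K] {b : K}
    (hb : b′ = 0) (r : ℕ) (x : K) : (⇑deriv)^[r] (x / b) = (⇑deriv)^[r] x / b := by
  induction r generalizing x with
  | zero => rfl
  | succ r ih =>
    rw [Function.iterate_succ_apply, Function.iterate_succ_apply,
      Derivation.leibniz_div_const _ _ _ hb, smul_eq_mul, inv_mul_eq_div, ih]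

end Differential

section EvalNatSeries

variable {R : Type*} [CommRing R]

noncomputable def evalNatSeries (c : ℕ → R) : R[X] →ₗ[R] R⟦X⟧ where
  toFun p := PowerSeries.mk fun n => c n * p.eval (n : R)
  map_add' p q := by ext n; simp [mul_add]
  map_smul' a p := by ext n; simp [mul_left_comm]

theorem evalNatSeries_injective [IsDomain R] [CharZero R] {c : ℕ → R} (hc : ∀ n, c n ≠ 0) :
    Function.Injective (evalNatSeries c) := by
  rw [← LinearMap.ker_eq_bot, LinearMap.ker_eq_bot']
  intro p hp
  have hroot (n : ℕ) : p.IsRoot (n : R) := by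
    simpa [evalNatSeries, hc n] using congrArg (PowerSeries.coeff n) hp
  exact eq_zero_of_infinite_isRoot p (Set.infinite_of_injective_forall_mem Nat.cast_injective hroot)

end EvalNatSeries

open Differential

/-- Let `E` be a differential field of characteristic zero with derivation `δ`, extended
coefficientwise to `E⟦X⟧`.  If `a ∈ E` satisfies `δ a ≠ 0`, then for every `m` the power
series `δ^r(e^{ax})`, `0 ≤ r ≤ m`, are linearly independent over `E`. -/
theorem derivatives_of_exp_linearIndependent
    {E : Type*} [Field E] [CharZero E]
    (δ : E → E)
    (hadd : ∀ x y : E, δ (x + y) = δ x + δ y)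
    (hleib : ∀ x y : E, δ (x * y) = δ x * y + x * δ y)
    (a : E) (ha : δ a ≠ 0) (m : ℕ) :
    LinearIndependent E (fun r : Fin (m + 1) => (coeffWiseMap δ)^[(r : ℕ)] (expSeries' a)) := by
  let _ : Differential E := ⟨Derivation.ofAddLeibniz δ hadd hleib⟩
  have ha₀ : a ≠ 0 := by rintro rfl; exact ha (map_zero Differential.deriv)
  have hu : δ a / a ≠ 0 := div_ne_zero ha ha₀
  have hau : a′ = δ a / a * a := (div_mul_cancel₀ (δ a) ha₀).symm
  have hfac (n : ℕ) : (n.factorial : E)′ = 0 := Derivation.map_natCast _ _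
  have hseries : (fun r : Fin (m + 1) => (coeffWiseMap δ)^[(r : ℕ)] (expSeries' a)) =
      evalNatSeries (fun n => a ^ n / n.factorial) ∘ fun r : Fin (m + 1) => powDerivSeq hu r := by
    funext r
    ext n
    simp only [Function.comp_apply, coeff_iterate_coeffWiseMap, expSeries', evalNatSeries,
      powDerivSeq, PowerSeries.coeff_mk, LinearMap.coe_mk, AddHom.coe_mk]
    change (⇑Differential.deriv)^[r] (a ^ n / _) = _
    rw [iterate_deriv_div_of_deriv_eq_zero (hfac n), iterate_deriv_pow_of_deriv_eq_mul hau]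
    ring
  rw [hseries]
  exact ((powDerivSeq hu).linearIndependent.comp _ Fin.val_injective).map' _
    (LinearMap.ker_eq_bot.mpr (evalNatSeries_injective fun n =>
      div_ne_zero (pow_ne_zero n ha₀) (Nat.cast_ne_zero.mpr n.factorial_ne_zero)))
end

section
/- Let E be a Δ-Σ-field of characteristic zero with derivations δ_1,…,δ_s and automorphisms σ_1,…,σ_t (all pairwise commuting). Then the following are equivalent: (1) δ_1,…,δ_s are linearly independent over the field of constants C(E) := {a ∈ E | δ_i a = 0 for all i and σ_j a = a for all j}, i.e. c_1 δ_1 + … + c_s δ_s = 0 on E with c_i ∈ C(E) implies all c_i = 0; (2) δ_1,…,δ_s are linearly independent over E, i.e. b_1 δ_1 + … + b_s δ_s = 0 on E with b_i ∈ E implies all b_i = 0; (3) there exist a_1,…,a_s ∈ E such that det J(a_1,…,a_s) ≠ 0, where J(a_1,…,a_s) is the s×s matrix with (i,j)-entry δ_j a_i. -/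
/-!
Relations `∑ bᵢ δᵢ = 0` with coefficients in `E` form an `E`-subspace of `Eˢ`. Because the
operators commute, this subspace is stable under applying any `δₖ` or any `σⱼ` coordinatewise.
Normalize a nonzero relation of minimal support to have a coordinate equal to `1`: applying `δₖ`,
or `σⱼ - id`, gives a relation of strictly smaller support, hence zero. So the normalized relation
has constant coefficients, which gives (1) ⇒ (2).

For (2) ⇔ (3): the `δᵢ` are `E`-linearly independent iff the vectors `(δ₁ a, …, δₛ a)`, `a ∈ E`,
span `Eˢ`, iff `s` of them form a basis, i.e. some Jacobian matrix is nonsingular.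
-/

open Finset

section LinearRelations

variable {R ι X : Type*} [CommRing R] [Fintype ι]

def linearRelations (f : ι → X → R) : Submodule R (ι → R) :=
  LinearMap.ker (Fintype.linearCombination R f)

theorem mem_linearRelations {f : ι → X → R} {b : ι → R} :
    b ∈ linearRelations f ↔ ∀ x, ∑ i, b i * f i x = 0 := by
  simp [linearRelations, Fintype.linearCombination_apply, funext_iff, Finset.sum_apply]

theorem linearIndependent_fun_iff {f : ι → X → R} :
    LinearIndependent R f ↔ ∀ b : ι → R, (∀ x, ∑ i, b i * f i x = 0) → ∀ i, b i = 0 := by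
  simp only [Fintype.linearIndependent_iff, funext_iff, Finset.sum_apply, Pi.smul_apply,
    smul_eq_mul, Pi.zero_apply]

theorem linearRelations_eq_bot_iff {f : ι → X → R} :
    linearRelations f = ⊥ ↔ LinearIndependent R f := by
  simp only [Submodule.eq_bot_iff, mem_linearRelations, linearIndependent_fun_iff, funext_iff,
    Pi.zero_apply]

end LinearRelations

section Field

variable {K ι X : Type*} [Field K] [Fintype ι]

theorem LinearIndependent.span_range_swap_eq_top {f : ι → X → K} (hf : LinearIndependent K f) :
    Submodule.span K (Set.range (Function.swap f)) = ⊤ := by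
  classical
  by_contra hne
  obtain ⟨φ, hφ, hle⟩ := Submodule.exists_le_ker_of_lt_top _ (lt_top_iff_ne_top.2 hne)
  refine hφ ((Pi.basisFun K ι).ext fun i => ?_)
  refine linearIndependent_fun_iff.1 hf (fun i => φ (Pi.basisFun K ι i)) (fun x => ?_) i
  have hx : φ (Function.swap f x) = 0 := hle (Submodule.subset_span ⟨x, rfl⟩)
  rw [← (Pi.basisFun K ι).sum_repr (Function.swap f x), map_sum] at hx
  simpa [mul_comm] using hx

theorem LinearIndependent.exists_det_ne_zero [DecidableEq ι] {f : ι → X → K}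
    (hf : LinearIndependent K f) : ∃ a : ι → X, (Matrix.of fun i j => f j (a i)).det ≠ 0 := by
  let b := Module.Basis.ofSpan hf.span_range_swap_eq_top.ge
  let b' := b.reindex (b.indexEquiv (Pi.basisFun K ι))
  have hb' (i : ι) : b' i ∈ Set.range (Function.swap f) :=
    Module.Basis.ofSpan_subset _ ⟨_, (b.reindex_apply _ i).symm⟩
  choose a ha using hb'
  refine ⟨a, ?_⟩
  rw [← isUnit_iff_ne_zero, ← Matrix.isUnit_iff_isUnit_det,
    ← Matrix.linearIndependent_rows_iff_isUnit,
    show (Matrix.of fun i j => f j (a i)).row = b' from funext ha]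
  exact b'.linearIndependent

theorem linearIndependent_of_det_ne_zero [DecidableEq ι] {f : ι → X → K} {a : ι → X}
    (ha : (Matrix.of fun i j => f j (a i)).det ≠ 0) : LinearIndependent K f := by
  refine linearIndependent_fun_iff.2 fun b hb => congrFun (Matrix.eq_zero_of_mulVec_eq_zero ha ?_)
  funext k
  simpa [Matrix.mulVec, dotProduct, mul_comm] using hb (a k)

theorem exists_det_ne_zero_iff_linearIndependent [DecidableEq ι] (f : ι → X → K) :
    (∃ a : ι → X, (Matrix.of fun i j => f j (a i)).det ≠ 0) ↔ LinearIndependent K f :=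
  ⟨fun ⟨_, ha⟩ => linearIndependent_of_det_ne_zero ha, LinearIndependent.exists_det_ne_zero⟩

theorem Submodule.exists_ne_zero_forall_apply_eq_zero {κ : Type*} (V : Submodule K (ι → K))
    (hV : V ≠ ⊥) (φ : κ → K →+ K) (hφ1 : ∀ k, φ k 1 = 0) (hφV : ∀ k, ∀ b ∈ V, φ k ∘ b ∈ V) :
    ∃ c ∈ V, c ≠ 0 ∧ ∀ k i, φ k (c i) = 0 := by
  classical
  let supp (b : ι → K) : Finset ι := univ.filter (b · ≠ 0)
  obtain ⟨b, ⟨hbV, hb0⟩, hmin⟩ := (measure fun b => #(supp b)).wf.has_min {b | b ∈ V ∧ b ≠ 0}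
    (V.ne_bot_iff.1 hV)
  obtain ⟨i₀, hi₀⟩ := Function.ne_iff.1 hb0
  set c := (b i₀)⁻¹ • b with hc
  have hci₀ : c i₀ = 1 := inv_mul_cancel₀ hi₀
  refine ⟨c, V.smul_mem _ hbV, fun h => one_ne_zero (hci₀ ▸ congrFun h i₀), fun k => ?_⟩
  by_contra! hk
  refine hmin (φ k ∘ c) ⟨hφV k c (V.smul_mem _ hbV), fun h => ?_⟩ ?_
  · obtain ⟨i, hi⟩ := hk
    exact hi (congrFun h i)
  · have hsub : supp (φ k ∘ c) ⊆ (supp b).erase i₀ := by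
      intro j hj
      simp only [supp, mem_erase, mem_filter, mem_univ, true_and, Function.comp_apply] at hj ⊢
      refine ⟨fun hj₀ => hj (hj₀ ▸ hci₀ ▸ hφ1 k), fun hbj => hj ?_⟩
      simp [hc, hbj]
    exact (card_le_card hsub).trans_lt (card_erase_lt_of_mem (by simpa [supp] using hi₀))

end Field

section DifferenceDifferential

def Derivation.ofLeibniz {A : Type*} [CommRing A] (d : A → A)
    (hadd : ∀ x y, d (x + y) = d x + d y) (hleib : ∀ x y, d (x * y) = d x * y + x * d y) :
    Derivation ℤ A A :=
  Derivation.mk' (AddMonoidHom.mk' d hadd).toIntLinearMap fun x y => by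
    simp [hleib, add_comm, mul_comm]

variable {A E ι τ : Type*} [CommRing A] [Field E] [Fintype ι]

theorem derivation_apply_mem_linearRelations {D : ι → Derivation ℤ A A} {k : ι}
    (hk : ∀ i x, D k (D i x) = D i (D k x)) {b : ι → A}
    (hb : b ∈ linearRelations fun i => ⇑(D i)) :
    (fun i => D k (b i)) ∈ linearRelations fun i => ⇑(D i) := by
  rw [mem_linearRelations] at hb ⊢
  intro x
  have h := congrArg (D k) (hb x)
  simp only [map_sum, Derivation.leibniz, smul_eq_mul, sum_add_distrib, map_zero, hk] at h
  simpa only [hb, zero_add, mul_comm] using h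

theorem ringEquiv_apply_mem_linearRelations {D : ι → Derivation ℤ A A} {σ : A ≃+* A}
    (hDσ : ∀ i x, D i (σ x) = σ (D i x)) {b : ι → A}
    (hb : b ∈ linearRelations fun i => ⇑(D i)) :
    (fun i => σ (b i)) ∈ linearRelations fun i => ⇑(D i) := by
  rw [mem_linearRelations] at hb ⊢
  intro x
  have h := congrArg σ (hb (σ.symm x))
  simpa only [map_sum, map_mul, ← hDσ, RingEquiv.apply_symm_apply, map_zero] using h

theorem linearIndependent_of_forall_constant_relation_eq_zero {D : ι → Derivation ℤ E E}
    {σ : τ → E ≃+* E}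
    (hDD : ∀ i k x, D i (D k x) = D k (D i x)) (hDσ : ∀ i j x, D i (σ j x) = σ j (D i x))
    (h : ∀ c : ι → E, (∀ i, (∀ k, D k (c i) = 0) ∧ ∀ j, σ j (c i) = c i) →
      (∀ x, ∑ i, c i * D i x = 0) → ∀ i, c i = 0) :
    LinearIndependent E fun i => ⇑(D i) := by
  rw [← linearRelations_eq_bot_iff]
  by_contra hV
  let φ : ι ⊕ τ → E →+ E :=
    Sum.elim (fun k => (D k).toAddMonoidHom) fun j => (σ j).toAddMonoidHom - AddMonoidHom.id E
  obtain ⟨c, hcV, hc0, hc⟩ := (linearRelations _).exists_ne_zero_forall_apply_eq_zero hV φ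
    (by rintro (k | j) <;> simp [φ])
    (by
      rintro (k | j) b hb
      · exact derivation_apply_mem_linearRelations (hDD k) hb
      · exact sub_mem (ringEquiv_apply_mem_linearRelations (hDσ · j) hb) hb)
  have hc_const (i : ι) : (∀ k, D k (c i) = 0) ∧ ∀ j, σ j (c i) = c i :=
    ⟨fun k => hc (.inl k) i, fun j => sub_eq_zero.1 (hc (.inr j) i)⟩
  exact hc0 (funext (h c hc_const (mem_linearRelations.1 hcV)))

end DifferenceDifferential

theorem nondegenerate_iff_jacobian_general
    {E : Type*} [Field E]
    {s t : ℕ}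
    (δ : Fin s → (E → E)) (σ : Fin t → (E ≃+* E))
    (hadd : ∀ i, ∀ x y : E, δ i (x + y) = δ i x + δ i y)
    (hleib : ∀ i, ∀ x y : E, δ i (x * y) = δ i x * y + x * δ i y)
    (hδδ : ∀ i j, ∀ x : E, δ i (δ j x) = δ j (δ i x))
    (hδσ : ∀ i j, ∀ x : E, δ i (σ j x) = σ j (δ i x)) :
    ((∀ c : Fin s → E,
        (∀ i, (∀ k, δ k (c i) = 0) ∧ (∀ j, σ j (c i) = c i)) →
        (∀ x : E, ∑ i, c i * δ i x = 0) → ∀ i, c i = 0) ↔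
      (∀ b : Fin s → E, (∀ x : E, ∑ i, b i * δ i x = 0) → ∀ i, b i = 0))
    ∧
    ((∀ b : Fin s → E, (∀ x : E, ∑ i, b i * δ i x = 0) → ∀ i, b i = 0) ↔
      (∃ a : Fin s → E, (Matrix.of fun i j : Fin s => δ j (a i)).det ≠ 0)) := by
  let D i := Derivation.ofLeibniz (δ i) (hadd i) (hleib i)
  rw [← linearIndependent_fun_iff, exists_det_ne_zero_iff_linearIndependent]
  exact ⟨⟨linearIndependent_of_forall_constant_relation_eq_zero (D := D) hδδ hδσ,
    fun hδ c _ => linearIndependent_fun_iff.1 hδ c⟩, Iff.rfl⟩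

/-- **Equivalent characterizations of nondegeneracy of the derivations.**
Let `E` be a Δ-Σ-field of characteristic zero with derivations `δ_1, …, δ_s` and
automorphisms `σ_1, …, σ_t`, all pairwise commuting.  Then the following are equivalent:
(1) `δ_1, …, δ_s` are linearly independent over the field of Δ-Σ-constants `C(E)`;
(2) `δ_1, …, δ_s` are linearly independent over `E`;
(3) there exist `a_1, …, a_s ∈ E` with `det J(a_1, …, a_s) ≠ 0`, where `J` has
`(i,j)`-entry `δ_j a_i`. -/
theorem nondegenerate_iff_jacobian
    {E : Type*} [Field E] [CharZero E]
    {s t : ℕ}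
    (δ : Fin s → (E → E)) (σ : Fin t → (E ≃+* E))
    (hadd : ∀ i, ∀ x y : E, δ i (x + y) = δ i x + δ i y)
    (hleib : ∀ i, ∀ x y : E, δ i (x * y) = δ i x * y + x * δ i y)
    (hδδ : ∀ i j, ∀ x : E, δ i (δ j x) = δ j (δ i x))
    (hδσ : ∀ i j, ∀ x : E, δ i (σ j x) = σ j (δ i x))
    (hσσ : ∀ i j, ∀ x : E, σ i (σ j x) = σ j (σ i x)) :
    ((∀ c : Fin s → E,
        (∀ i, (∀ k, δ k (c i) = 0) ∧ (∀ j, σ j (c i) = c i)) →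
        (∀ x : E, ∑ i, c i * δ i x = 0) → ∀ i, c i = 0) ↔
      (∀ b : Fin s → E, (∀ x : E, ∑ i, b i * δ i x = 0) → ∀ i, b i = 0))
    ∧
    ((∀ b : Fin s → E, (∀ x : E, ∑ i, b i * δ i x = 0) → ∀ i, b i = 0) ↔
      (∃ a : Fin s → E, (Matrix.of fun i j : Fin s => δ j (a i)).det ≠ 0)) :=
  nondegenerate_iff_jacobian_general δ σ hadd hleib hδδ hδσ
end

section
/- Let E be a Δ-Σ-field of characteristic zero with derivations δ_1,…,δ_s, let n ≥ s, and let a_1,…,a_n ∈ E be such that det J(a_1,…,a_s) ≠ 0. Then there exists a nonempty Zariski open subset U of the finite-dimensional ℚ-vector space {P ∈ ℚ[x_1,…,x_n] | deg P ≤ 2} such that for every P ∈ U, setting P_a := P(a_1,…,a_n), one has det J(δ_1 P_a, …, δ_s P_a) ≠ 0, where J(δ_1 P_a,…,δ_s P_a) is the s×s matrix with (i,j)-entry δ_j δ_i P_a. In particular, there exists a polynomial P ∈ ℚ[x_1,…,x_n] of degree at most 2 with det J(δ_1 P_a,…,δ_s P_a) ≠ 0. -/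
/-- The coefficient space of polynomials of degree at most 2 in `n` variables:
a constant coefficient, linear coefficients, and quadratic coefficients. -/
abbrev QuadCoeffIdx (n : ℕ) : Type := Unit ⊕ Fin n ⊕ Fin n × Fin n

/-- The degree-≤-2 polynomial with the given coefficient vector:
`P = v(const) + Σ_i v(lin i) x_i + Σ_{i,j} v(quad (i,j)) x_i x_j`. -/
noncomputable def quadPoly {n : ℕ} (v : QuadCoeffIdx n → ℚ) : MvPolynomial (Fin n) ℚ :=
  MvPolynomial.C (v (Sum.inl ())) +
    ∑ i, MvPolynomial.C (v (Sum.inr (Sum.inl i))) * MvPolynomial.X i +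
    ∑ p : Fin n × Fin n,
      MvPolynomial.C (v (Sum.inr (Sum.inr p))) * (MvPolynomial.X p.1 * MvPolynomial.X p.2)

/-- A subset of the affine coordinate space `ℚ^D` is Zariski open if it is the complement
of the zero locus of a set of polynomials, i.e. the set of points where some polynomial
of a given family does not vanish. -/
def IsZariskiOpen {D : Type*} (U : Set (D → ℚ)) : Prop :=
  ∃ S : Set (MvPolynomial D ℚ), U = {v | ∃ g ∈ S, MvPolynomial.eval v g ≠ 0}

section AuxForJacobian

open MvPolynomial

variable {D E : Type*} [Field E] [CharZero E]

noncomputable def coeffMap (f : E →ₗ[ℚ] ℚ) (p : MvPolynomial D E) : MvPolynomial D ℚ :=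
  ∑ m ∈ p.support, MvPolynomial.monomial m (f (MvPolynomial.coeff m p))

lemma coeffMap_coeff (f : E →ₗ[ℚ] ℚ) (p : MvPolynomial D E) (m : D →₀ ℕ) :
    MvPolynomial.coeff m (coeffMap f p) = f (MvPolynomial.coeff m p) := by
  classical
  rw [coeffMap, MvPolynomial.coeff_sum]
  simp only [MvPolynomial.coeff_monomial]
  rw [Finset.sum_ite_eq' p.support m fun m' => f (MvPolynomial.coeff m' p)]
  split_ifs with h
  · rfl
  · rw [MvPolynomial.notMem_support_iff.1 h, map_zero]

lemma eval_coeffMap (f : E →ₗ[ℚ] ℚ) (p : MvPolynomial D E) (v : D → ℚ) :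
    MvPolynomial.eval v (coeffMap f p)
      = f (MvPolynomial.eval (fun d => algebraMap ℚ E (v d)) p) := by
  classical
  rw [coeffMap, map_sum, MvPolynomial.eval_eq (fun d => algebraMap ℚ E (v d)) p, map_sum]
  refine Finset.sum_congr rfl fun m hm => ?_
  rw [MvPolynomial.eval_monomial]
  have h1 : (∏ i ∈ m.support, algebraMap ℚ E (v i) ^ m i)
      = algebraMap ℚ E (∏ i ∈ m.support, v i ^ m i) := by
    rw [map_prod]
    simp [map_pow]
  have h2 : MvPolynomial.coeff m p * (∏ i ∈ m.support, algebraMap ℚ E (v i) ^ m i)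
      = (∏ i ∈ m.support, v i ^ m i) • MvPolynomial.coeff m p := by
    rw [h1, Algebra.smul_def, mul_comm]
  rw [h2, map_smul, smul_eq_mul, Finsupp.prod, mul_comm]

lemma sum_castLE {s n : ℕ} (hsn : s ≤ n) {M : Type*} [AddCommMonoid M] (f : Fin n → M)
    (hf : ∀ k : Fin n, ¬ (k : ℕ) < s → f k = 0) :
    ∑ k : Fin n, f k = ∑ k : Fin s, f (Fin.castLE hsn k) := by
  classical
  rw [← Finset.sum_image (g := Fin.castLE hsn) (f := f) (s := (Finset.univ : Finset (Fin s)))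
    (fun x _ y _ h => Fin.castLE_injective hsn h)]
  exact (Finset.sum_subset (Finset.subset_univ _) fun x _ hx =>
    hf x fun hlt => hx (Finset.mem_image.2 ⟨⟨(x : ℕ), hlt⟩, Finset.mem_univ _, Fin.ext rfl⟩)).symm

lemma sum_castLE_pair {s n : ℕ} (hsn : s ≤ n) {M : Type*} [AddCommMonoid M]
    (f : Fin n × Fin n → M)
    (hf : ∀ p : Fin n × Fin n, ¬ (p.1 = p.2 ∧ (p.1 : ℕ) < s) → f p = 0) :
    ∑ p : Fin n × Fin n, f p = ∑ k : Fin s, f (Fin.castLE hsn k, Fin.castLE hsn k) := by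
  classical
  rw [← Finset.sum_image (g := fun k : Fin s => (Fin.castLE hsn k, Fin.castLE hsn k)) (f := f)
    (s := (Finset.univ : Finset (Fin s)))
    (fun x _ y _ h => Fin.castLE_injective hsn (congrArg Prod.fst h))]
  refine (Finset.sum_subset (Finset.subset_univ _) fun p _ hp => hf p fun hc => ?_).symm
  exact hp (Finset.mem_image.2 ⟨⟨(p.1 : ℕ), hc.2⟩, Finset.mem_univ _,
    by rw [show Fin.castLE hsn ⟨(p.1 : ℕ), hc.2⟩ = p.1 from Fin.ext rfl]; exact Prod.ext rfl hc.1⟩)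

lemma exists_dual_ne_zero {E : Type*} [Field E] [CharZero E] {c : E} (hc : c ≠ 0) :
    ∃ f : E →ₗ[ℚ] ℚ, f c ≠ 0 := by
  classical
  let b := Module.Basis.ofVectorSpace ℚ E
  have : b.repr c ≠ 0 := fun h => hc (by simpa using congrArg b.repr.symm h)
  obtain ⟨β, hβ⟩ := Finsupp.ne_iff.1 this
  exact ⟨b.coord β, by simpa [Module.Basis.coord_apply] using hβ⟩

end AuxForJacobian

/-- Let `E` be a Δ-Σ-field of characteristic zero, `n ≥ s`, and `a_1, …, a_n ∈ E` with
`det J(a_1, …, a_s) ≠ 0` (`J` has `(i,j)`-entry `δ_j a_i`).  Then there is a nonempty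
Zariski open subset `U` of the space of rational polynomials of degree at most 2 in `n`
variables (identified with its coefficient space) such that for every `P ∈ U`,
`det J(δ_1 P_a, …, δ_s P_a) ≠ 0`, where `P_a = P(a_1, …, a_n)`.  In particular, some
polynomial `P ∈ ℚ[x_1, …, x_n]` of degree at most 2 has this property. -/

theorem zariski_open_nonzero_jacobian
    {E : Type*} [Field E] [CharZero E]
    {s t n : ℕ} (hsn : s ≤ n)
    (δ : Fin s → (E → E)) (σ : Fin t → (E ≃+* E))
    (hadd : ∀ i, ∀ x y : E, δ i (x + y) = δ i x + δ i y)
    (hleib : ∀ i, ∀ x y : E, δ i (x * y) = δ i x * y + x * δ i y)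
    (hδδ : ∀ i j, ∀ x : E, δ i (δ j x) = δ j (δ i x))
    (hδσ : ∀ i j, ∀ x : E, δ i (σ j x) = σ j (δ i x))
    (hσσ : ∀ i j, ∀ x : E, σ i (σ j x) = σ j (σ i x))
    (a : Fin n → E)
    (hJac : (Matrix.of fun i j : Fin s => δ j (a (Fin.castLE hsn i))).det ≠ 0) :
    ∃ U : Set (QuadCoeffIdx n → ℚ),
      IsZariskiOpen U ∧ U.Nonempty ∧
      (∀ v ∈ U,
        (Matrix.of fun i j : Fin s =>
          δ j (δ i (MvPolynomial.aeval a (quadPoly v)))).det ≠ 0) ∧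
      ∃ P : MvPolynomial (Fin n) ℚ, P.totalDegree ≤ 2 ∧
        (Matrix.of fun i j : Fin s =>
          δ j (δ i (MvPolynomial.aeval a P))).det ≠ 0 := by
  classical
  have hδ0 : ∀ i, δ i 0 = 0 := by
    intro i
    have h := hadd i 0 0
    rw [add_zero] at h
    exact (left_eq_add.1 h)
  have hδ1 : ∀ i, δ i 1 = 0 := by
    intro i
    have h := hleib i 1 1
    rw [mul_one, one_mul, mul_one] at h
    exact (left_eq_add.1 h)
  have hsmul : ∀ (i : Fin s) (q : ℚ) (x : E), δ i (q • x) = q • δ i x := fun i q x =>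
    map_rat_smul (AddMonoidHom.mk' (δ i) (hadd i)) q x
  have hsum : ∀ (i : Fin s) {ι : Type} (t : Finset ι) (g : ι → E),
      δ i (∑ k ∈ t, g k) = ∑ k ∈ t, δ i (g k) := by
    intro i ι t g
    exact map_sum (AddMonoidHom.mk' (δ i) (hadd i)) g t
  -- the generic polynomial matrix
  set Ppoly : Matrix (Fin s) (Fin s) (MvPolynomial (QuadCoeffIdx n) E) :=
    Matrix.of fun i j =>
      (∑ k : Fin n, MvPolynomial.C (δ j (δ i (a k)))
          * MvPolynomial.X (Sum.inr (Sum.inl k))) +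
      ∑ p : Fin n × Fin n, MvPolynomial.C (δ j (δ i (a p.1 * a p.2)))
          * MvPolynomial.X (Sum.inr (Sum.inr p)) with hPpoly
  set G : MvPolynomial (QuadCoeffIdx n) E := Ppoly.det with hG
  have hevalG : ∀ w : QuadCoeffIdx n → E, MvPolynomial.eval w G
      = (Matrix.of fun i j => MvPolynomial.eval w (Ppoly i j)).det := by
    intro w
    rw [hG, RingHom.map_det]
    rfl
  have hB : ∀ (v : QuadCoeffIdx n → ℚ) (i j : Fin s),
      MvPolynomial.eval (fun d => algebraMap ℚ E (v d)) (Ppoly i j)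
        = δ j (δ i ((MvPolynomial.aeval a) (quadPoly v))) := by
    intro v i j
    have hQ : (MvPolynomial.aeval a) (quadPoly v)
        = algebraMap ℚ E (v (Sum.inl ()))
          + (∑ k : Fin n, algebraMap ℚ E (v (Sum.inr (Sum.inl k))) * a k)
          + ∑ p : Fin n × Fin n,
              algebraMap ℚ E (v (Sum.inr (Sum.inr p))) * (a p.1 * a p.2) := by
      simp [quadPoly]
    have key : δ j (δ i ((MvPolynomial.aeval a) (quadPoly v)))
        = (∑ k : Fin n, v (Sum.inr (Sum.inl k)) • δ j (δ i (a k)))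
          + ∑ p : Fin n × Fin n,
              v (Sum.inr (Sum.inr p)) • δ j (δ i (a p.1 * a p.2)) := by
      rw [hQ]
      simp only [Algebra.smul_def]
      simp only [← Algebra.smul_def (R := ℚ) (A := E)]
      simp only [Algebra.algebraMap_eq_smul_one]
      simp only [hadd, hsum, hsmul, hδ1, smul_zero, hδ0, zero_add]
    rw [key]
    simp [hPpoly, Algebra.smul_def, mul_comm]
  -- the witness point with coordinates in E
  set w0 : QuadCoeffIdx n → E := Sum.elim (fun _ => 0)
    (Sum.elim (fun k => if (k : ℕ) < s then -a k else 0)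
      (fun p => if p.1 = p.2 ∧ (p.1 : ℕ) < s then (2:E)⁻¹ else 0)) with hw0
  have hW : ∀ i j : Fin s, MvPolynomial.eval w0 (Ppoly i j)
      = ∑ k : Fin s, δ i (a (Fin.castLE hsn k)) * δ j (a (Fin.castLE hsn k)) := by
    intro i j
    have h1 : MvPolynomial.eval w0 (Ppoly i j)
        = (∑ k : Fin n, δ j (δ i (a k)) * (if (k : ℕ) < s then -a k else 0))
          + ∑ p : Fin n × Fin n, δ j (δ i (a p.1 * a p.2))
              * (if p.1 = p.2 ∧ (p.1 : ℕ) < s then (2:E)⁻¹ else 0) := by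
      simp [hPpoly, hw0]
    rw [h1, sum_castLE hsn _ (fun k hk => by rw [if_neg hk, mul_zero]),
        sum_castLE_pair hsn _ (fun p hp => by rw [if_neg hp, mul_zero]),
        ← Finset.sum_add_distrib]
    refine Finset.sum_congr rfl fun k _ => ?_
    set x := a (Fin.castLE hsn k) with hx
    have hx1 : ((Fin.castLE hsn k : Fin n) : ℕ) < s := k.isLt
    rw [if_pos hx1, if_pos ⟨rfl, hx1⟩]
    have hxx : δ j (δ i (x * x))
        = δ j (δ i x) * x + δ i x * δ j x + (δ j x * δ i x + x * δ j (δ i x)) := by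
      rw [hleib i x x, hadd j, hleib j, hleib j]
    rw [hxx]
    have h2 : (2:E) ≠ 0 := two_ne_zero
    field_simp
    ring
  have hGne : G ≠ 0 := by
    intro h0
    have hne : MvPolynomial.eval w0 G ≠ 0 := by
      have hC : (Matrix.of fun i j => MvPolynomial.eval w0 (Ppoly i j))
          = (Matrix.of fun i j : Fin s => δ j (a (Fin.castLE hsn i))).transpose
            * (Matrix.of fun i j : Fin s => δ j (a (Fin.castLE hsn i))) := by
        ext i j
        simp [Matrix.mul_apply, Matrix.transpose_apply, hW]
      rw [hevalG w0, hC, Matrix.det_mul, Matrix.det_transpose]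
      exact mul_ne_zero hJac hJac
    rw [h0, map_zero] at hne
    exact hne rfl
  obtain ⟨m, hm⟩ := MvPolynomial.ne_zero_iff.1 hGne
  obtain ⟨f, hf⟩ := exists_dual_ne_zero hm
  have hg0 : coeffMap f G ≠ 0 := fun h =>
    hf (by rw [← coeffMap_coeff f G m, h, MvPolynomial.coeff_zero])
  have hv0 : ∃ v : QuadCoeffIdx n → ℚ, MvPolynomial.eval v (coeffMap f G) ≠ 0 := by
    by_contra h
    push_neg at h
    exact hg0 (MvPolynomial.funext fun x => by rw [h x, map_zero])
  obtain ⟨v0, hv0⟩ := hv0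
  set S : Set (MvPolynomial (QuadCoeffIdx n) ℚ) :=
    Set.range fun f : E →ₗ[ℚ] ℚ => coeffMap f G with hS
  set U : Set (QuadCoeffIdx n → ℚ) := {v | ∃ g ∈ S, MvPolynomial.eval v g ≠ 0} with hU
  have hv0U : v0 ∈ U := ⟨coeffMap f G, ⟨f, rfl⟩, hv0⟩
  have hmain : ∀ v ∈ U,
      (Matrix.of fun i j : Fin s =>
        δ j (δ i ((MvPolynomial.aeval a) (quadPoly v)))).det ≠ 0 := by
    intro v hv
    obtain ⟨g, ⟨f', rfl⟩, hg⟩ := hv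
    rw [eval_coeffMap] at hg
    have hGv : MvPolynomial.eval (fun d => algebraMap ℚ E (v d)) G ≠ 0 := fun h =>
      hg (by rw [h, map_zero])
    rw [hevalG] at hGv
    have hmat : (Matrix.of fun i j => MvPolynomial.eval (fun d => algebraMap ℚ E (v d)) (Ppoly i j))
        = Matrix.of fun i j : Fin s => δ j (δ i ((MvPolynomial.aeval a) (quadPoly v))) := by
      ext i j
      exact hB v i j
    rwa [hmat] at hGv
  have hdeg : (quadPoly v0).totalDegree ≤ 2 := by
    refine le_trans (MvPolynomial.totalDegree_add _ _) (max_le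
      (le_trans (MvPolynomial.totalDegree_add _ _) (max_le ?_ ?_)) ?_)
    · simp [MvPolynomial.totalDegree_C]
    · refine le_trans (MvPolynomial.totalDegree_finset_sum _ _) (Finset.sup_le fun i _ => ?_)
      refine le_trans (MvPolynomial.totalDegree_mul _ _) ?_
      simp [MvPolynomial.totalDegree_C, MvPolynomial.totalDegree_X]
    · refine le_trans (MvPolynomial.totalDegree_finset_sum _ _) (Finset.sup_le fun p _ => ?_)
      refine le_trans (MvPolynomial.totalDegree_mul _ _) ?_
      have : (MvPolynomial.X p.1 * MvPolynomial.X p.2 : MvPolynomial (Fin n) ℚ).totalDegree ≤ 2 :=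
        le_trans (MvPolynomial.totalDegree_mul _ _)
          (by simp [MvPolynomial.totalDegree_X])
      simp only [MvPolynomial.totalDegree_C, zero_add]
      exact this
  exact ⟨U, ⟨S, rfl⟩, ⟨v0, hv0U⟩, hmain, quadPoly v0, hdeg, hmain v0 hv0U⟩
end

section
/- Let F ⊆ E be an extension of Δ-Σ-fields of characteristic zero (derivations δ_1,…,δ_s, automorphisms σ_1,…,σ_t, all commuting) such that: E = F(δ^α σ^β a_j | 1 ≤ j ≤ n, α ∈ ℤ_{≥0}^s, β ∈ ℤ^t) for some a_1,…,a_n ∈ E with s ≤ n; E is nondegenerate, i.e. δ_1,…,δ_s are linearly independent over E and σ^β|_E = id only for β = 0 ∈ ℤ^t; and det J(a_1,…,a_s) ≠ 0. Then for every m ∈ ℤ_{≥0} there exists a polynomial P ∈ F[x_1,…,x_n] of degree at most 2 such that, setting P_a := P(a_1,…,a_n), the element P_a is m-nonperiodic and det J(δ_1 P_a,…,δ_s P_a) ≠ 0. -/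
/-- Iterated application of the derivations: `δ^α = δ_1^{α_1} ∘ ⋯ ∘ δ_s^{α_s}`. -/
def dIter {E : Type*} {s : ℕ} (δ : Fin s → (E → E)) (α : Fin s → ℕ) (x : E) : E :=
  (List.finRange s).foldl (fun y i => (δ i)^[α i] y) x

/-- Iterated application of the automorphisms with integer exponents:
`σ^β = σ_1^{β_1} ∘ ⋯ ∘ σ_t^{β_t}` for `β ∈ ℤ^t`. -/
def sIterZ {E : Type*} [Field E] {t : ℕ} (σ : Fin t → (E ≃+* E)) (β : Fin t → ℤ) (x : E) : E :=
  (List.finRange t).foldl (fun y i => (σ i ^ β i) y) x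

/-- Iterated application of the automorphisms with nonnegative exponents:
`σ^β = σ_1^{β_1} ∘ ⋯ ∘ σ_t^{β_t}` for `β ∈ ℤ_{≥0}^t`. -/
def sIterN {E : Type*} [Field E] {t : ℕ} (σ : Fin t → (E ≃+* E)) (β : Fin t → ℕ) (x : E) : E :=
  (List.finRange t).foldl (fun y i => (⇑(σ i))^[β i] y) x

/-- An element `x` is `m`-nonperiodic if `σ^α x = σ^β x` for `α, β ∈ ℤ_{≥0}^t`
with `|α| ≤ m` and `|β| ≤ m` implies `α = β`. -/
def IsNonperiodic {E : Type*} [Field E] {t : ℕ} (σ : Fin t → (E ≃+* E)) (m : ℕ) (x : E) : Prop :=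
  ∀ α β : Fin t → ℕ, (∑ i, α i) ≤ m → (∑ i, β i) ≤ m → sIterN σ α x = sIterN σ β x → α = β

/-!
For `α ≠ β` with `|α|, |β| ≤ m`, the automorphisms `σ^α ≠ σ^β` commute with all `δ_i` and `σ_j`;
as `E` is generated over `F` by the `δ^μ σ^ν a_j`, they already differ on `F` or on some `a_j`.
Take `P_a = ∑_v q_v G_v` with rational `q_v`, where the `G_v` are one separating constant `c ∈ F`
for each such pair, the `a_j`, and the `a_k`, `a_k²` for `k ≤ s`. Both required properties then
say that a polynomial in the `q_v`, a product of nonzero linear forms times `det(δ_j δ_i P_a)`,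
does not vanish, and a nonzero polynomial over a field of characteristic zero has a rational
non-root. The determinant factor is nonzero as a polynomial: with the `E`-valued weights `1` on
`a_k²` and `-2 a_k` on `a_k`, the matrix `∑_v w_v δ_j δ_i G_v` is `2 JᵀJ` for `J = J(a_1, …, a_s)`.
-/

theorem List.foldl_smul_eq_prod_reverse_smul {ι M α : Type*} [Monoid M] [MulAction M α]
    (g : ι → M) (l : List ι) (x : α) :
    l.foldl (fun y i => g i • y) x = (l.map g).reverse.prod • x := by
  induction l generalizing x with
  | nil => simp
  | cons i l ih => simp [ih, mul_smul]

theorem dIter_commute {E : Type*} {s : ℕ} {δ : Fin s → E → E} {f : E → E}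
    (hf : ∀ i, Function.Commute f (δ i)) (μ : Fin s → ℕ) : Function.Commute f (dIter δ μ) := by
  intro x
  simp only [dIter]
  induction List.finRange s generalizing x with
  | nil => rfl
  | cons i l ih => simp only [List.foldl_cons, ← ((hf i).iterate_right (μ i)).eq, ih]

theorem finite_setOf_ne_of_sum_le (t m : ℕ) : {p : (Fin t → ℕ) × (Fin t → ℕ) |
    ∑ i, p.1 i ≤ m ∧ ∑ i, p.2 i ≤ m ∧ p.1 ≠ p.2}.Finite := by
  have hbox : {α : Fin t → ℕ | ∑ i, α i ≤ m}.Finite := (Set.finite_Iic fun _ => m).subset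
    fun _ hα i => (Finset.single_le_sum (fun _ _ => Nat.zero_le _) (Finset.mem_univ i)).trans hα
  exact (hbox.prod hbox).subset fun p hp => ⟨hp.1, hp.2.1⟩

section Automorphisms

variable {E : Type*} [Field E]

def commutingAut (d : E → E) : Subgroup (RingAut E) where
  carrier := {f | Function.Commute f d}
  mul_mem' hf hg := hf.comp_left hg
  one_mem' _ := rfl
  inv_mem' {f} hf :=
    Function.Commute.symm (hf.symm.inverses_right f.apply_symm_apply f.symm_apply_apply)

variable {t : ℕ} (σ : Fin t → RingAut E) (hσ : Pairwise fun i j => Commute (σ i) (σ j))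

def sigmaPowHom : (Fin t → Multiplicative ℤ) →* RingAut E :=
  MonoidHom.noncommPiCoprod (fun i => zpowersHom _ (σ i)) fun _ _ hij _ _ => (hσ hij).zpow_zpow _ _

theorem sIterZ_eq_sigmaPowHom (β : Fin t → ℤ) :
    sIterZ σ β = sigmaPowHom σ hσ (fun i => .ofAdd (β i)) := by
  classical
  funext x
  have hl : (List.finRange t).reverse.Nodup := List.nodup_reverse.2 (List.nodup_finRange t)
  have hu : (List.finRange t).reverse.toFinset = Finset.univ := by ext; simp
  refine (List.foldl_smul_eq_prod_reverse_smul (fun i => σ i ^ β i) _ x).trans ?_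
  rw [← List.map_reverse,
    ← Finset.noncommProd_toFinset _ _ (fun i _ j _ hij => (hσ hij).zpow_zpow _ _) hl, hu]
  rfl

theorem sIterN_eq_sIterZ (α : Fin t → ℕ) : sIterN σ α = sIterZ σ (fun i => α i) := by
  funext x
  simp only [sIterN, sIterZ, zpow_natCast, ← RingAut.smul_def]
  congr 1
  funext y i
  exact congrFun (smul_iterate (σ i) (α i)) y

theorem sIterN_eq_sigmaPowHom (α : Fin t → ℕ) :
    sIterN σ α = sigmaPowHom σ hσ (fun i => .ofAdd (α i : ℤ)) := by
  rw [sIterN_eq_sIterZ, sIterZ_eq_sigmaPowHom σ hσ]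

theorem sigmaPowHom_commute {d : E → E} (hd : ∀ j, Function.Commute (σ j) d)
    (β : Fin t → Multiplicative ℤ) : Function.Commute (sigmaPowHom σ hσ β) d := by
  have hrange : (sigmaPowHom σ hσ).range ≤ commutingAut d :=
    (MonoidHom.noncommPiCoprod_range (ϕ := fun i => zpowersHom _ (σ i))).trans_le
      (iSup_le fun j => (Subgroup.zpowers_le (H := commutingAut d)).2 (hd j))
  exact hrange ⟨β, rfl⟩

theorem sigmaPowHom_commute_sIterZ (γ : Fin t → Multiplicative ℤ) (β : Fin t → ℤ) :
    Function.Commute (sigmaPowHom σ hσ γ) (sIterZ σ β) := fun x => by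
  rw [sIterZ_eq_sigmaPowHom σ hσ]
  exact congrArg (· x) (congrArg DFunLike.coe ((Commute.all _ _).map (sigmaPowHom σ hσ)).eq)

theorem sigmaPowHom_injective (hσind : ∀ β : Fin t → ℤ, (∀ x : E, sIterZ σ β x = x) → β = 0) :
    Function.Injective (sigmaPowHom σ hσ) := by
  refine (injective_iff_map_eq_one _).2 fun β hβ => ?_
  have := hσind (fun i => (β i).toAdd) fun x => by
    rw [sIterZ_eq_sigmaPowHom σ hσ]
    exact congrArg (· x) (congrArg DFunLike.coe hβ)
  funext i
  exact congrFun this i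

end Automorphisms

section Generators

variable {E : Type*} [Field E] {s t n : ℕ} (F : Subfield E) (δ : Fin s → E → E)
  (σ : Fin t → RingAut E) (a : Fin n → E)
  (hgen : Subfield.closure ((F : Set E) ∪
    Set.range (fun p : (Fin s → ℕ) × (Fin t → ℤ) × Fin n =>
      dIter δ p.1 (sIterZ σ p.2.1 (a p.2.2)))) = ⊤)
include hgen

theorem ringHom_ext_of_closure_eq_top
    {f g : E →+* E} (hfδ : ∀ i, Function.Commute f (δ i)) (hgδ : ∀ i, Function.Commute g (δ i))
    (hfσ : ∀ β, Function.Commute f (sIterZ σ β)) (hgσ : ∀ β, Function.Commute g (sIterZ σ β))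
    (hF : ∀ c ∈ F, f c = g c) (ha : ∀ j, f (a j) = g (a j)) : f = g := by
  refine RingHom.eq_of_eqOn_of_field_closure_eq_top hgen ?_
  rintro _ (hc | ⟨⟨μ, β, j⟩, rfl⟩)
  · exact hF _ hc
  · rw [(dIter_commute hfδ μ).eq, (hfσ β).eq, ha j, ← (hgσ β).eq, ← (dIter_commute hgδ μ).eq]

theorem exists_separating_of_ne
    (hδσ : ∀ i j, ∀ x : E, δ i (σ j x) = σ j (δ i x))
    (hσ : Pairwise fun i j => Commute (σ i) (σ j))
    (hσind : ∀ β : Fin t → ℤ, (∀ x : E, sIterZ σ β x = x) → β = 0)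
    {α β : Fin t → ℕ} (hαβ : α ≠ β) :
    ∃ c : F, (∃ j, sIterN σ α (a j) ≠ sIterN σ β (a j)) ∨ sIterN σ α c ≠ sIterN σ β c := by
  simp only [sIterN_eq_sigmaPowHom σ hσ]
  by_contra! h
  refine hαβ (funext fun i => ?_)
  have hδ : ∀ γ i, Function.Commute (sigmaPowHom σ hσ γ) (δ i) := fun γ i =>
    sigmaPowHom_commute σ hσ (fun j x => (hδσ i j x).symm) γ
  have := sigmaPowHom_injective σ hσ hσind (RingEquiv.toRingHom_injective
    (ringHom_ext_of_closure_eq_top F δ σ a hgen (hδ _) (hδ _)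
      (sigmaPowHom_commute_sIterZ σ hσ _) (sigmaPowHom_commute_sIterZ σ hσ _)
      (fun c hc => (h ⟨c, hc⟩).2) (h 0).1))
  exact Nat.cast_injective (R := ℤ) (congrFun this i)

end Generators

namespace MvPolynomial

variable {E ι : Type*} [Field E]

theorem exists_ratCast_eval_ne_zero [CharZero E] {f : MvPolynomial ι E} (hf : f ≠ 0) :
    ∃ q : ι → ℚ, eval (fun i => (q i : E)) f ≠ 0 := by
  by_contra! h
  refine hf (funext_set (fun _ => Set.range ((↑) : ℚ → E))
    (fun _ => Set.infinite_range_of_injective Rat.cast_injective) fun x hx => ?_)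
  choose q hq using fun i => hx i (Set.mem_univ i)
  rw [map_zero, ← h q]
  exact congrArg (eval · f) (_root_.funext fun i => (hq i).symm)

theorem totalDegree_map_le {R S σ : Type*} [CommSemiring R] [CommSemiring S] (f : R →+* S)
    (p : MvPolynomial σ R) : (map f p).totalDegree ≤ p.totalDegree :=
  Finset.sup_mono (support_map_subset f p)

section LinearForm

variable [Fintype ι]

noncomputable def linearForm (e : ι → E) : MvPolynomial ι E := ∑ v, C (e v) * X v

theorem eval_linearForm (e x : ι → E) : eval x (linearForm e) = ∑ v, x v * e v := by
  simp [linearForm, mul_comm]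

theorem linearForm_ne_zero {e : ι → E} (he : e ≠ 0) : linearForm e ≠ 0 := by
  classical
  obtain ⟨v, hv⟩ := Function.ne_iff.1 he
  intro h
  have := congrArg (eval (Pi.single v 1)) h
  simp [eval_linearForm, Pi.single_apply] at this
  exact hv this

end LinearForm

/-- The `x_{b k}` repeat some `x_j`, so that the weights of
`exists_weight_det_quadraticGens_ne_zero` sit on a summand of their own. -/
noncomputable def quadraticGens {R K : Type*} [CommSemiring R] {n s : ℕ} (c : K → R)
    (b : Fin s → Fin n) : K ⊕ Fin n ⊕ Fin s ⊕ Fin s → MvPolynomial (Fin n) R :=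
  Sum.elim (fun k => C (c k)) (Sum.elim X (Sum.elim (fun k => X (b k)) fun k => X (b k) ^ 2))

theorem totalDegree_quadraticGens_le {R K : Type*} [CommSemiring R] [Nontrivial R] {n s : ℕ}
    (c : K → R) (b : Fin s → Fin n) (v : K ⊕ Fin n ⊕ Fin s ⊕ Fin s) :
    (quadraticGens c b v).totalDegree ≤ 2 := by
  rcases v with k | j | k | k <;> simp [quadraticGens, totalDegree_X_pow]

theorem exists_ne_aeval_quadraticGens {R E K : Type*} [CommSemiring R] [CommSemiring E]
    [Algebra R E] {n s : ℕ} {f g : E → E} (c : K → R) (b : Fin s → Fin n) (a : Fin n → E) {k : K}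
    (h : (∃ j, f (a j) ≠ g (a j)) ∨ f (algebraMap R E (c k)) ≠ g (algebraMap R E (c k))) :
    ∃ v, f (aeval a (quadraticGens c b v)) ≠ g (aeval a (quadraticGens c b v)) := by
  rcases h with ⟨j, hj⟩ | hk
  · exact ⟨.inr (.inl j), by simpa [quadraticGens] using hj⟩
  · exact ⟨.inl k, by simpa [quadraticGens] using hk⟩

end MvPolynomial

open MvPolynomial

theorem exists_rat_combination {E ι K : Type*} [Field E] [CharZero E] [Fintype ι] [Fintype K]
    {s : ℕ} (G : ι → E) (L : K → E →+ E) (hL : ∀ k, ∃ v, L k (G v) ≠ 0)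
    (D : Fin s → Fin s → E →+ E)
    (hD : ∃ w₀ : ι → E, (Matrix.of fun i j => ∑ v, w₀ v * D i j (G v)).det ≠ 0) :
    ∃ q : ι → ℚ, (∀ k, L k (∑ v, q v • G v) ≠ 0) ∧
      (Matrix.of fun i j => D i j (∑ v, q v • G v)).det ≠ 0 := by
  obtain ⟨w₀, hw₀⟩ := hD
  have hmap : ∀ (f : E →+ E) (q : ι → ℚ),
      f (∑ v, q v • G v) = eval (fun v => (q v : E)) (linearForm fun v => f (G v)) := by
    intro f q
    simp only [map_sum, map_rat_smul, eval_linearForm]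
    simp only [Rat.smul_def]
  set M : Matrix (Fin s) (Fin s) (MvPolynomial ι E) :=
    .of fun i j => linearForm fun v => D i j (G v)
  have hM : M.det ≠ 0 := by
    intro h
    apply hw₀
    have := congrArg (eval w₀) h
    rw [RingHom.map_det, map_zero] at this
    convert this using 2
    ext i j
    simp [M, eval_linearForm]
  have hΦ : ∀ k, linearForm (fun v => L k (G v)) ≠ 0 := fun k =>
    linearForm_ne_zero (Function.ne_iff.2 (hL k))
  obtain ⟨q, hq⟩ := exists_ratCast_eval_ne_zero
    (mul_ne_zero hM (Finset.prod_ne_zero_iff.2 fun k _ => hΦ k))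
  rw [map_mul, map_prod, RingHom.map_det] at hq
  refine ⟨q, fun k => ?_, ?_⟩
  · rw [hmap]
    exact Finset.prod_ne_zero_iff.1 (right_ne_zero_of_mul hq) k (Finset.mem_univ k)
  · convert left_ne_zero_of_mul hq using 2
    ext i j
    exact hmap _ q

section Jacobian

variable {E : Type*} [Field E] [NeZero (2 : E)] {s : ℕ} (δ : Fin s → E → E)
  (hadd : ∀ i, ∀ x y : E, δ i (x + y) = δ i x + δ i y)
  (hleib : ∀ i, ∀ x y : E, δ i (x * y) = δ i x * y + x * δ i y)
include hadd hleib

theorem det_sum_sq_sub_hessian_ne_zero (b : Fin s → E)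
    (hb : (Matrix.of fun i j => δ j (b i)).det ≠ 0) :
    (Matrix.of fun i j => ∑ k, (δ j (δ i (b k ^ 2)) - 2 * b k * δ j (δ i (b k)))).det ≠ 0 := by
  have hentry : ∀ i j k, δ j (δ i (b k ^ 2)) - 2 * b k * δ j (δ i (b k))
      = 2 * (δ i (b k) * δ j (b k)) := by
    intro i j k
    rw [sq, hleib i, hadd j, hleib j, hleib j]
    ring
  set J := Matrix.of fun i j => δ j (b i)
  have hsq : (Matrix.of fun i j => ∑ k, (δ j (δ i (b k ^ 2)) - 2 * b k * δ j (δ i (b k))))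
      = (2 : E) • (J.transpose * J) := by
    ext i j
    simp [hentry, J, Matrix.mul_apply, Finset.mul_sum]
  rw [hsq, Matrix.det_smul, Matrix.det_mul, Matrix.det_transpose]
  exact mul_ne_zero (pow_ne_zero _ two_ne_zero) (mul_ne_zero hb hb)

theorem exists_weight_det_quadraticGens_ne_zero {R K : Type*} [CommSemiring R] [Algebra R E]
    [Fintype K] {n : ℕ} (c : K → R) (b : Fin s → Fin n) (a : Fin n → E)
    (hJac : (Matrix.of fun i j => δ j (a (b i))).det ≠ 0) :
    ∃ w₀ : K ⊕ Fin n ⊕ Fin s ⊕ Fin s → E, (Matrix.of fun i j =>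
      ∑ v, w₀ v * δ j (δ i (aeval a (quadraticGens c b v)))).det ≠ 0 := by
  refine ⟨Sum.elim 0 (Sum.elim 0 (Sum.elim (fun k => -2 * a (b k)) 1)), ?_⟩
  convert det_sum_sq_sub_hessian_ne_zero δ hadd hleib (a ∘ b) hJac using 3 with i j
  simp [quadraticGens, Fintype.sum_sum_type]
  funext i j
  ring

end Jacobian

theorem exists_nonperiodic_nonzero_jacobian_general
    {E : Type*} [Field E] [CharZero E] (F : Subfield E)
    {s t n : ℕ} (hsn : s ≤ n)
    (δ : Fin s → (E → E)) (σ : Fin t → (E ≃+* E))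
    (hadd : ∀ i, ∀ x y : E, δ i (x + y) = δ i x + δ i y)
    (hleib : ∀ i, ∀ x y : E, δ i (x * y) = δ i x * y + x * δ i y)
    (hδσ : ∀ i j, ∀ x : E, δ i (σ j x) = σ j (δ i x))
    (hσσ : ∀ i j, ∀ x : E, σ i (σ j x) = σ j (σ i x))
    (a : Fin n → E)
    (hgen : Subfield.closure ((F : Set E) ∪
      Set.range (fun p : (Fin s → ℕ) × (Fin t → ℤ) × Fin n =>
        dIter δ p.1 (sIterZ σ p.2.1 (a p.2.2)))) = ⊤)
    (hσind : ∀ β : Fin t → ℤ, (∀ x : E, sIterZ σ β x = x) → β = 0)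
    (hJac : (Matrix.of fun i j : Fin s => δ j (a (Fin.castLE hsn i))).det ≠ 0)
    (m : ℕ) :
    ∃ P : MvPolynomial (Fin n) E,
      (∀ d : Fin n →₀ ℕ, MvPolynomial.coeff d P ∈ F) ∧
      P.totalDegree ≤ 2 ∧
      IsNonperiodic σ m (MvPolynomial.eval a P) ∧
      (Matrix.of fun i j : Fin s =>
        δ j (δ i (MvPolynomial.eval a P))).det ≠ 0 := by
  have hσ : Pairwise fun i j => Commute (σ i) (σ j) := fun i j _ => RingEquiv.ext (hσσ i j)
  let K := {p : (Fin t → ℕ) × (Fin t → ℕ) // ∑ i, p.1 i ≤ m ∧ ∑ i, p.2 i ≤ m ∧ p.1 ≠ p.2}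
  have : Fintype K := (finite_setOf_ne_of_sum_le t m).fintype
  choose c hc using fun k : K => exists_separating_of_ne F δ σ a hgen hδσ hσ hσind k.2.2.2
  let gens := quadraticGens c (Fin.castLE hsn)
  let τ (α : Fin t → ℕ) : E →+ E := (sigmaPowHom σ hσ fun i => .ofAdd (α i : ℤ) : E →+* E)
  have hτ (α : Fin t → ℕ) (x : E) : τ α x = sIterN σ α x := by rw [sIterN_eq_sigmaPowHom σ hσ]; rfl
  obtain ⟨q, hq_sep, hq_jac⟩ := exists_rat_combination (fun v => aeval a (gens v))
    (fun k : K => τ k.1.1 - τ k.1.2) (fun k => by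
      simpa [hτ, sub_eq_zero] using exists_ne_aeval_quadraticGens (f := sIterN σ k.1.1)
        (g := sIterN σ k.1.2) c (Fin.castLE hsn) a (hc k))
    (fun i j => (AddMonoidHom.mk' (δ j) (hadd j)).comp (AddMonoidHom.mk' (δ i) (hadd i)))
    (exists_weight_det_quadraticGens_ne_zero δ hadd hleib _ _ a hJac)
  let P : MvPolynomial (Fin n) F := ∑ v, q v • gens v
  have hPa : eval a (map F.subtype P) = ∑ v, q v • aeval a (gens v) := by
    simp only [eval_map, ← Subfield.algebraMap_ofSubfield, ← aeval_def, P, map_sum, map_rat_smul]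
  refine ⟨map F.subtype P, fun d => by simp [coeff_map], (totalDegree_map_le _ _).trans
    (totalDegree_finsetSum_le fun v _ => (totalDegree_smul_le _ _).trans
      (totalDegree_quadraticGens_le _ _ v)), fun α β hα hβ heq => ?_, hPa ▸ hq_jac⟩
  by_contra hne
  exact hq_sep ⟨(α, β), hα, hβ, hne⟩ (by rw [AddMonoidHom.sub_apply, hτ, hτ, ← hPa, heq, sub_self])

/-- Let `F ⊆ E` be a nondegenerate extension of Δ-Σ-fields of characteristic zero with
`E = F⟨a_1, …, a_n⟩`, `s ≤ n`, and `det J(a_1, …, a_s) ≠ 0`.  Then for every `m` there is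
a polynomial `P ∈ F[x_1, …, x_n]` of degree at most 2 such that `P_a := P(a_1, …, a_n)`
is `m`-nonperiodic and `det J(δ_1 P_a, …, δ_s P_a) ≠ 0`. -/
theorem exists_nonperiodic_nonzero_jacobian
    {E : Type*} [Field E] [CharZero E] (F : Subfield E)
    {s t n : ℕ} (hsn : s ≤ n)
    (δ : Fin s → (E → E)) (σ : Fin t → (E ≃+* E))
    (hadd : ∀ i, ∀ x y : E, δ i (x + y) = δ i x + δ i y)
    (hleib : ∀ i, ∀ x y : E, δ i (x * y) = δ i x * y + x * δ i y)
    (hδδ : ∀ i j, ∀ x : E, δ i (δ j x) = δ j (δ i x))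
    (hδσ : ∀ i j, ∀ x : E, δ i (σ j x) = σ j (δ i x))
    (hσσ : ∀ i j, ∀ x : E, σ i (σ j x) = σ j (σ i x))
    (hFδ : ∀ i, ∀ x ∈ F, δ i x ∈ F)
    (hFσ : ∀ j, ∀ x ∈ F, σ j x ∈ F)
    (hFσinv : ∀ j, ∀ x ∈ F, (σ j).symm x ∈ F)
    (a : Fin n → E)
    (hgen : Subfield.closure ((F : Set E) ∪
      Set.range (fun p : (Fin s → ℕ) × (Fin t → ℤ) × Fin n =>
        dIter δ p.1 (sIterZ σ p.2.1 (a p.2.2)))) = ⊤)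
    (hδind : ∀ b : Fin s → E, (∀ x : E, ∑ i, b i * δ i x = 0) → ∀ i, b i = 0)
    (hσind : ∀ β : Fin t → ℤ, (∀ x : E, sIterZ σ β x = x) → β = 0)
    (hJac : (Matrix.of fun i j : Fin s => δ j (a (Fin.castLE hsn i))).det ≠ 0)
    (m : ℕ) :
    ∃ P : MvPolynomial (Fin n) E,
      (∀ d : Fin n →₀ ℕ, MvPolynomial.coeff d P ∈ F) ∧
      P.totalDegree ≤ 2 ∧
      IsNonperiodic σ m (MvPolynomial.eval a P) ∧
      (Matrix.of fun i j : Fin s =>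
        δ j (δ i (MvPolynomial.eval a P))).det ≠ 0 :=
  exists_nonperiodic_nonzero_jacobian_general F hsn δ σ hadd hleib hδσ hσσ a hgen hσind hJac m
end

section
/- Let K be a field of characteristic zero and let ∂_1,…,∂_n denote the formal partial derivatives on K[[x_1,…,x_n]]. Let m ∈ ℤ_{≥0} and for each 1 ≤ i ≤ n let D_i = Σ_{j=0}^{m} c_{ij} ∂_i^j be a nonzero differential operator with coefficients c_{ij} ∈ K. Then for every f ∈ K[[x_1,…,x_n]], if D_1 f = … = D_n f = 0 and the coefficient of x^k in f vanishes for every k ∈ {0,1,…,m}^n, then f = 0. -/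
/-!
Let `j₀` be the largest index with `c_{i j₀} ≠ 0`. Reading `D_i f = 0` at the monomial
`x^(k - j₀ e_i)` expresses `c_{i j₀} (k_i - j₀ + 1) ⋯ k_i · f_k` through coefficients of `f` at
exponents strictly below `k` in the pointwise order; in characteristic zero the factor in front
of `f_k` is nonzero. So once `k_i > m` for some `i`, `f_k` vanishes if all smaller coefficients
do, and well-founded induction on exponents, started on the box `{0, …, m}ⁿ`, gives `f = 0`.
-/

/-- The formal partial derivative `∂_i` on `K⟦x_1, …, x_n⟧`:
the coefficient of `x^k` in `∂_i f` is `(k_i + 1)` times the coefficient of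
`x^{k + 1_i}` in `f`. -/
noncomputable def mvPDeriv {K : Type*} [Field K] {n : ℕ} (i : Fin n)
    (f : MvPowerSeries (Fin n) K) : MvPowerSeries (Fin n) K :=
  fun k => ((k i : K) + 1) * MvPowerSeries.coeff (k + Finsupp.single i 1) f

open MvPowerSeries Finsupp Finset

section
variable {K : Type*} [Field K] {n : ℕ}

theorem coeff_mvPDeriv (i : Fin n) (k : Fin n →₀ ℕ) (f : MvPowerSeries (Fin n) K) :
    coeff k (mvPDeriv i f) = ((k i : K) + 1) * coeff (k + single i 1) f :=
  rfl

theorem coeff_iterate_mvPDeriv (i : Fin n) (j : ℕ) (k : Fin n →₀ ℕ)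
    (f : MvPowerSeries (Fin n) K) :
    coeff k ((mvPDeriv i)^[j] f) = ((k i + 1).ascFactorial j : K) * coeff (k + single i j) f := by
  induction j generalizing f with
  | zero => simp
  | succ j ih =>
    rw [Function.iterate_succ_apply, ih, Nat.ascFactorial_succ]
    simp only [coeff_mvPDeriv, Finsupp.add_apply, single_eq_same, add_assoc, ← single_add]
    push_cast
    ring

theorem sum_coeff_eq_zero_of_sum_iterate_mvPDeriv_eq_zero {m : ℕ} {i : Fin n} {c : ℕ → K}
    {f : MvPowerSeries (Fin n) K} (h : ∑ j ∈ range (m + 1), c j • (mvPDeriv i)^[j] f = 0)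
    (k : Fin n →₀ ℕ) :
    ∑ j ∈ range (m + 1), c j * (k i + 1).ascFactorial j * coeff (k + single i j) f = 0 := by
  simpa [map_sum, coeff_iterate_mvPDeriv, mul_assoc] using congrArg (coeff k) h

theorem coeff_eq_zero_of_sum_iterate_mvPDeriv_eq_zero [CharZero K] {m : ℕ} {i : Fin n}
    {c : ℕ → K} (hc : ∃ j ≤ m, c j ≠ 0) {f : MvPowerSeries (Fin n) K}
    (h : ∑ j ∈ range (m + 1), c j • (mvPDeriv i)^[j] f = 0) {k : Fin n →₀ ℕ} (hk : m ≤ k i)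
    (hlt : ∀ l < k, coeff l f = 0) : coeff k f = 0 := by
  classical
  obtain ⟨j', hj'm, hcj'⟩ := hc
  set j₀ := Nat.findGreatest (c · ≠ 0) m
  have hj₀m : j₀ ≤ m := Nat.findGreatest_le m
  have hcj₀ : c j₀ ≠ 0 := Nat.findGreatest_spec (P := (c · ≠ 0)) hj'm hcj'
  set l := k - single i j₀
  have hlk : l + single i j₀ = k := tsub_add_cancel_of_le (single_le_iff.2 (hj₀m.trans hk))
  have hsum := sum_coeff_eq_zero_of_sum_iterate_mvPDeriv_eq_zero h l
  rw [sum_eq_single_of_mem j₀ (mem_range.2 (Nat.lt_succ_of_le hj₀m)), hlk] at hsum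
  · have hasc : ((l i + 1).ascFactorial j₀ : K) ≠ 0 := by
      exact_mod_cast (Nat.ascFactorial_pos _ _).ne'
    simpa [hcj₀, hasc] using hsum
  intro j hj hne
  rcases hne.lt_or_gt with hj₀ | hj₀
  · rw [hlt, mul_zero]
    calc l + single i j < l + single i j₀ :=
          add_lt_add_right (single_mono.strictMono_of_injective (single_injective i) hj₀) l
      _ = k := hlk
  · rw [not_not.1 (Nat.findGreatest_is_greatest hj₀ (Nat.lt_succ_iff.1 (mem_range.1 hj))),
      zero_mul, zero_mul]

end

/-- **Multivariate analogue of the truncation lemma.**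
Let `K` be a field of characteristic zero, and for each `1 ≤ i ≤ n` let
`D_i = Σ_{j=0}^m c_{ij} ∂_i^j` be a nonzero differential operator with constant
coefficients.  If `D_1 f = ⋯ = D_n f = 0` and all coefficients of `f` on the box
`{0, …, m}^n` vanish, then `f = 0`. -/
theorem mv_powerSeries_pde_trunc_zero
    {K : Type*} [Field K] [CharZero K] {n m : ℕ}
    (c : Fin n → ℕ → K)
    (hc : ∀ i, ∃ j ≤ m, c i j ≠ 0)
    (f : MvPowerSeries (Fin n) K)
    (hD : ∀ i, ∑ j ∈ Finset.range (m + 1), c i j • (mvPDeriv i)^[j] f = 0)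
    (htrunc : ∀ k : Fin n →₀ ℕ, (∀ i, k i ≤ m) → MvPowerSeries.coeff k f = 0) :
    f = 0 := by
  ext k
  rw [map_zero]
  induction k using WellFoundedLT.induction with
  | _ k ih =>
    by_cases hbox : ∀ i, k i ≤ m
    · exact htrunc k hbox
    obtain ⟨i, hi⟩ := not_forall.1 hbox
    exact coeff_eq_zero_of_sum_iterate_mvPDeriv_eq_zero (hc i) (hD i) (not_le.1 hi).le ih
end

section
/- Let g ∈ ℂ(z) be a rational function and let d be a nonzero rational number. Then g cannot satisfy the difference equation g(z+1) = g(z) + d/z^2; that is, there is no g ∈ ℂ(z) whose shift by 1 differs from g by d/z^2 with d ≠ 0. -/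
/-- No rational function `g ∈ ℂ(z)` satisfies the difference equation
`g(z + 1) = g(z) + d / z²` for a nonzero rational number `d`.
Here the shift `g(z) ↦ g(z + 1)` is (the unique) `ℂ`-algebra endomorphism `τ` of
`ℂ(z)` with `τ(z) = z + 1`. -/
theorem no_ratFunc_solution_of_difference_equation
    (τ : RatFunc ℂ →+* RatFunc ℂ)
    (hτC : ∀ c : ℂ, τ (RatFunc.C c) = RatFunc.C c)
    (hτX : τ RatFunc.X = RatFunc.X + 1)
    (d : ℚ) (hd : d ≠ 0) (g : RatFunc ℂ) :
    τ g ≠ g + (d : RatFunc ℂ) / RatFunc.X ^ 2 := by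
  intro h
  set A := algebraMap (Polynomial ℂ) (RatFunc ℂ) with hA
  have hAinj : Function.Injective A := IsFractionRing.injective _ _
  have key : ∀ p : Polynomial ℂ, τ (A p) = A (p.comp (Polynomial.X + 1)) := by
    intro p
    induction p using Polynomial.induction_on' with
    | add p q hp hq => simp [map_add, Polynomial.add_comp, hp, hq]
    | monomial n a =>
      rw [← Polynomial.C_mul_X_pow_eq_monomial]
      simp [hA, map_mul, map_pow, RatFunc.algebraMap_C, RatFunc.algebraMap_X, hτC, hτX,
        Polynomial.mul_comp, Polynomial.C_comp, Polynomial.X_comp, Polynomial.pow_comp,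
        map_add, map_one]
  set p := g.num with hp
  set q := g.denom with hqdef
  have hq0 : q ≠ 0 := g.denom_ne_zero
  have hco : IsCoprime p q := g.isCoprime_num_denom
  have hg : A p / A q = g := g.num_div_denom
  set pc := p.comp (Polynomial.X + 1) with hpc
  set qc := q.comp (Polynomial.X + 1) with hqc
  have hAq : A q ≠ 0 := fun hh => hq0 (hAinj (by simpa using hh))
  have hAqc : A qc ≠ 0 := by
    have hk : A qc = τ (A q) := (key q).symm
    rw [hk]
    intro hh
    exact hAq (τ.injective (by rw [hh, map_zero]))
  have hAX : A Polynomial.X ≠ 0 := by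
    rw [RatFunc.algebraMap_X]; exact RatFunc.X_ne_zero
  have hdc : (d : RatFunc ℂ) = A (Polynomial.C (d : ℂ)) := by
    rw [RatFunc.algebraMap_C]
    rw [show ((d : ℂ)) = ((d : ℚ) : ℂ) from rfl, map_ratCast]
  have star : pc * q * Polynomial.X ^ 2
      = p * qc * Polynomial.X ^ 2 + Polynomial.C (d : ℂ) * (q * qc) := by
    apply hAinj
    have h' : A pc / A qc = A p / A q + A (Polynomial.C (d : ℂ)) / A Polynomial.X ^ 2 := by
      rw [← key p, ← key q, ← map_div₀, hg, ← hdc, RatFunc.algebraMap_X]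
      exact h
    field_simp at h'
    push_cast [map_mul, map_add, map_pow]
    linear_combination h'
  have hproot : ∀ a : ℂ, q.eval a = 0 → p.eval a ≠ 0 := by
    intro a hqa hpa
    obtain ⟨u, v, huv⟩ := hco
    have := congrArg (Polynomial.eval a) huv
    simp [hqa, hpa] at this
  have evalstar : ∀ a : ℂ,
      p.eval (a + 1) * q.eval a * a ^ 2
        = p.eval a * q.eval (a + 1) * a ^ 2 + (d : ℂ) * (q.eval a * q.eval (a + 1)) := by
    intro a
    have := congrArg (Polynomial.eval a) star
    simpa [hpc, hqc, Polynomial.eval_comp, Polynomial.eval_mul, Polynomial.eval_add,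
      Polynomial.eval_pow] using this
  have up : ∀ a : ℂ, q.eval a = 0 → a ≠ 0 → q.eval (a + 1) = 0 := by
    intro a hqa ha
    have h2 : p.eval a * q.eval (a + 1) * a ^ 2 = 0 := by
      have := evalstar a
      rw [hqa] at this
      linear_combination -this
    rcases mul_eq_zero.mp h2 with h3 | h3
    · rcases mul_eq_zero.mp h3 with h4 | h4
      · exact absurd h4 (hproot a hqa)
      · exact h4
    · exact absurd h3 (pow_ne_zero 2 ha)
  have down : ∀ a : ℂ, q.eval a = 0 → a ≠ 1 → q.eval (a - 1) = 0 := by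
    intro a hqa ha
    have e : a - 1 + 1 = a := by ring
    have h2 : p.eval a * q.eval (a - 1) * (a - 1) ^ 2 = 0 := by
      have := evalstar (a - 1)
      rw [e, hqa] at this
      linear_combination this
    rcases mul_eq_zero.mp h2 with h3 | h3
    · rcases mul_eq_zero.mp h3 with h4 | h4
      · exact absurd h4 (hproot a hqa)
      · exact h4
    · exact absurd h3 (pow_ne_zero 2 (sub_ne_zero.mpr ha))
  have hfin : Set.Finite { x | q.IsRoot x } := Polynomial.finite_setOf_isRoot hq0
  have h01 : q.eval 0 = 0 ∨ q.eval 1 = 0 := by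
    have h2 : (d : ℂ) * (q.eval 0 * q.eval (0 + 1)) = 0 := by
      have := evalstar 0
      linear_combination -this
    rcases mul_eq_zero.mp h2 with h3 | h3
    · exact absurd h3 (by exact_mod_cast hd)
    · rcases mul_eq_zero.mp h3 with h4 | h4
      · exact Or.inl h4
      · exact Or.inr (by rw [← zero_add 1]; exact h4)
  rcases h01 with h0 | h1
  · have hall : ∀ n : ℕ, q.eval (-(n : ℂ)) = 0 := by
      intro n
      induction n with
      | zero => rw [Nat.cast_zero, neg_zero]; exact h0
      | succ n ih =>
        have hne : (-(n : ℂ)) ≠ 1 := by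
          intro hh
          have : ((n : ℂ)) + 1 = 0 := by linear_combination -hh
          exact Nat.cast_add_one_ne_zero n this
        have := down (-(n : ℂ)) ih hne
        have e : (-(((n + 1 : ℕ)) : ℂ)) = -(n : ℂ) - 1 := by push_cast; ring
        rw [e]; exact this
    exact hfin.not_infinite <| Set.infinite_of_injective_forall_mem
      (f := fun n : ℕ => -(n : ℂ))
      (fun m n hmn => Nat.cast_injective (neg_injective hmn)) (fun n => hall n)
  · have hall : ∀ n : ℕ, q.eval ((n : ℂ) + 1) = 0 := by
      intro n
      induction n with
      | zero => rw [Nat.cast_zero, zero_add]; exact h1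
      | succ n ih =>
        have := up ((n : ℂ) + 1) ih (Nat.cast_add_one_ne_zero n)
        have e : (((n + 1 : ℕ)) : ℂ) + 1 = (n : ℂ) + 1 + 1 := by push_cast; ring
        rw [e]; exact this
    exact hfin.not_infinite <| Set.infinite_of_injective_forall_mem
      (f := fun n : ℕ => ((n : ℂ) + 1))
      (fun m n hmn => Nat.cast_injective (add_right_cancel hmn)) (fun n => hall n)
end
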